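/- arXiv:1906.11961 — 4 statements merged into one kernel-verified Lean document; each statement's English description precedes it below -/
import Mathlib

section
/- For all integers n ≥ 1, k ≥ 1 and every tuple p = (p_1,…,p_k) of nonnegative integers: M^n_{p} = Σ_{S ⊊ {1,…,k}} M^{n−1}_{p − e_S} = Σ_{∅ ≠ T ⊆ {1,…,k}} M^{n−1}_{p − 1 + e_T}, where the first sum is over proper subsets S of {1,…,k}, the second sum is over nonempty subsets T of {1,…,k}, e_S ∈ {0,1}^k denotes the indicator vector of S, and 1 = (1,…,1). -/
open Finset

/-- Binomial coefficient `C(a, b)` with integer lower argument; `0` unless `0 ≤ b ≤ a`. -/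
def chooseZ (a : ℕ) (b : ℤ) : ℕ := if 0 ≤ b then a.choose b.toNat else 0

/-- The coefficient `M^n_{p_1, …, p_k} = Σ_{t=0}^{n} (−1)^t C(n,t) ∏_i C(n−t, p_i−t)`. -/
def Mcoef (n : ℕ) {k : ℕ} (p : Fin k → ℤ) : ℤ :=
  ∑ t ∈ Finset.range (n + 1), (-1 : ℤ) ^ t * (n.choose t : ℤ) *
    ∏ i, (chooseZ (n - t) ((p i) - (t : ℤ)) : ℤ)

lemma chooseZ_succ (a : ℕ) (b : ℤ) :
    chooseZ (a + 1) b = chooseZ a b + chooseZ a (b - 1) := by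
  unfold chooseZ
  rcases lt_trichotomy b 0 with h | h | h
  · rw [if_neg (by omega), if_neg (by omega), if_neg (by omega)]
  · subst h; simp
  · rw [if_pos (by omega), if_pos (by omega), if_pos (by omega)]
    have h1 : b.toNat = (b - 1).toNat + 1 := by omega
    rw [h1, Nat.choose_succ_succ, Nat.add_comm]

lemma prod_expand {k : ℕ} (f g : Fin k → ℤ) :
    ∏ i, (f i + g i) =
      ∑ S ∈ (univ : Finset (Fin k)).powerset, ∏ i, (if i ∈ S then f i else g i) := by
  rw [Finset.prod_add]
  refine Finset.sum_congr rfl fun S _ => ?_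
  rw [Finset.prod_ite]
  congr 1
  · congr 1
    ext x; simp
  · congr 1
    ext x; simp

lemma key (m k : ℕ) (p : Fin k → ℤ) :
    Mcoef (m + 1) p =
      (∑ S ∈ (univ : Finset (Fin k)).powerset,
        Mcoef m (fun i => p i - (if i ∈ S then 1 else 0))) -
      Mcoef m (fun i => p i - 1) := by
  -- abbreviation for the inner product
  set A : ℕ → ℤ := fun t => ∏ i, (chooseZ (m + 1 - t) (p i - t) : ℤ) with hA
  have step1 : Mcoef (m + 1) p =
      (∑ t ∈ Finset.range (m + 1), (-1 : ℤ) ^ t * (m.choose t : ℤ) * A t)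
      - ∑ t ∈ Finset.range (m + 1), (-1 : ℤ) ^ t * (m.choose t : ℤ) * A (t + 1) := by
    have expand : ∀ t : ℕ, (-1 : ℤ) ^ (t + 1) * ((m + 1).choose (t + 1) : ℤ) * A (t + 1)
        = (-1 : ℤ) ^ (t + 1) * (m.choose (t + 1) : ℤ) * A (t + 1)
          - (-1 : ℤ) ^ t * (m.choose t : ℤ) * A (t + 1) := by
      intro t
      rw [Nat.choose_succ_succ]
      push_cast
      ring
    rw [show Mcoef (m + 1) p = ∑ t ∈ Finset.range (m + 1 + 1),
          (-1 : ℤ) ^ t * ((m + 1).choose t : ℤ) * A t from rfl,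
        Finset.sum_range_succ' _ (m + 1)]
    rw [Finset.sum_congr rfl (fun t _ => expand t), Finset.sum_sub_distrib]
    have h0 : (-1 : ℤ) ^ 0 * ((m + 1).choose 0 : ℤ) * A 0
        = (-1 : ℤ) ^ 0 * (m.choose 0 : ℤ) * A 0 := by simp
    rw [h0]
    have : (∑ t ∈ Finset.range (m + 1), (-1 : ℤ) ^ (t + 1) * (m.choose (t + 1) : ℤ) * A (t + 1))
        + (-1 : ℤ) ^ 0 * (m.choose 0 : ℤ) * A 0
        = ∑ t ∈ Finset.range (m + 1 + 1), (-1 : ℤ) ^ t * (m.choose t : ℤ) * A t := by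
      rw [Finset.sum_range_succ' (fun t => (-1 : ℤ) ^ t * (m.choose t : ℤ) * A t) (m + 1)]
    rw [sub_add_eq_add_sub, this, Finset.sum_range_succ]
    simp [Nat.choose_succ_self]
  rw [step1]
  congr 1
  · -- first sum equals ∑_S Mcoef m (p - e_S)
    have hAt : ∀ t ∈ Finset.range (m + 1), A t =
        ∑ S ∈ (univ : Finset (Fin k)).powerset,
          ∏ i, (chooseZ (m - t) (p i - (if i ∈ S then 1 else 0) - t) : ℤ) := by
      intro t ht
      simp only [Finset.mem_range] at ht
      have h1 : m + 1 - t = (m - t) + 1 := by omega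
      have : A t = ∏ i, ((chooseZ (m - t) (p i - t - 1) : ℤ) + (chooseZ (m - t) (p i - t) : ℤ)) := by
        refine Finset.prod_congr rfl fun i _ => ?_
        rw [h1, chooseZ_succ]
        push_cast
        ring
      rw [this, prod_expand]
      refine Finset.sum_congr rfl fun S _ => Finset.prod_congr rfl fun i _ => ?_
      split_ifs with h
      · congr 1; ring
      · congr 1; ring
    rw [show (∑ t ∈ Finset.range (m + 1), (-1 : ℤ) ^ t * (m.choose t : ℤ) * A t)
          = ∑ t ∈ Finset.range (m + 1), (-1 : ℤ) ^ t * (m.choose t : ℤ) *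
              (∑ S ∈ (univ : Finset (Fin k)).powerset,
                ∏ i, (chooseZ (m - t) (p i - (if i ∈ S then 1 else 0) - t) : ℤ)) from
        Finset.sum_congr rfl fun t ht => by rw [hAt t ht]]
    simp only [Finset.mul_sum]
    rw [Finset.sum_comm]
    refine Finset.sum_congr rfl fun S _ => ?_
    unfold Mcoef
    rfl
  · -- second sum equals Mcoef m (p - 1)
    unfold Mcoef
    refine Finset.sum_congr rfl fun t ht => ?_
    congr 1
    refine Finset.prod_congr rfl fun i _ => ?_
    have h1 : m + 1 - (t + 1) = m - t := by omega
    rw [h1]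
    congr 1
    push_cast
    ring

/-- The recurrence for the coefficients `M^n_p`: summing over proper subsets `S ⊊ [k]`, or
equivalently over nonempty subsets `T ⊆ [k]`. -/
theorem Mcoef_recurrence (n k : ℕ) (hn : 1 ≤ n) (hk : 1 ≤ k) (p : Fin k → ℕ) :
    Mcoef n (fun i => (p i : ℤ)) =
      (∑ S ∈ (Finset.univ : Finset (Fin k)).powerset.erase Finset.univ,
        Mcoef (n - 1) (fun i => (p i : ℤ) - (if i ∈ S then 1 else 0))) ∧
    Mcoef n (fun i => (p i : ℤ)) =
      (∑ T ∈ (Finset.univ : Finset (Fin k)).powerset.erase ∅,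
        Mcoef (n - 1) (fun i => (p i : ℤ) - 1 + (if i ∈ T then 1 else 0))) := by
  obtain ⟨m, rfl⟩ : ∃ m, n = m + 1 := ⟨n - 1, by omega⟩
  have hm : m + 1 - 1 = m := by omega
  rw [hm]
  have h1 : Mcoef (m + 1) (fun i => (p i : ℤ)) =
      ∑ S ∈ (Finset.univ : Finset (Fin k)).powerset.erase Finset.univ,
        Mcoef m (fun i => (p i : ℤ) - (if i ∈ S then 1 else 0)) := by
    rw [Finset.sum_erase_eq_sub (Finset.mem_powerset_self _), key]
    congr 1
    refine congrArg _ (funext fun i => ?_)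
    simp
  refine ⟨h1, ?_⟩
  rw [h1]
  refine (Finset.sum_nbij' (fun S => Sᶜ) (fun T => Tᶜ) ?_ ?_ ?_ ?_ ?_).symm
  · intro T hT
    simp only [Finset.mem_erase, Finset.mem_powerset] at hT ⊢
    refine ⟨fun h => hT.1 ?_, Finset.subset_univ _⟩
    rwa [Finset.compl_eq_univ_iff] at h
  · intro S hS
    simp only [Finset.mem_erase, Finset.mem_powerset] at hS ⊢
    refine ⟨fun h => hS.1 ?_, Finset.subset_univ _⟩
    rwa [Finset.compl_eq_empty_iff] at h
  · intro T _; exact compl_compl T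
  · intro S _; exact compl_compl S
  · intro T hT
    refine congrArg _ (funext fun i => ?_)
    by_cases h : i ∈ T <;> simp [h]
end

section
/- Let n ≥ 0, k ≥ 1 and let p_1,…,p_k be integers with 0 ≤ p_i ≤ n for all i and p_1 + ⋯ + p_k = n(k−1). Then M^n_{p_1,…,p_k} = n!/((n−p_1)!·(n−p_2)!⋯(n−p_k)!), the multinomial coefficient with parts n−p_1,…,n−p_k (which sum to n). -/
open Finset

/-! With `q i = n - p i` and the substitution `t ↦ n - t`, `M^n_p` becomes the `n`-th forward
difference at `0` of `m ↦ ∏ i, C(m, q i)`. Since `∑ i, q i = n`, this is a polynomial in `m` of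
degree `n` with leading coefficient `1 / ∏ i, (q i)!`, and the `n`-th forward difference of such a
polynomial is `n!` times its leading coefficient. -/

open Polynomial fwdDiff
open scoped Nat

section
variable {M G G' : Type*} [AddCommMonoid M] [AddCommGroup G] [AddCommGroup G']

lemma map_fwdDiff_iter (e : G →+ G') (h : M) (f : M → G) (n : ℕ) (y : M) :
    Δ_[h] ^[n] (e ∘ f) y = e (Δ_[h] ^[n] f y) := by
  simp [fwdDiff_iter_eq_sum_shift, map_sum, map_zsmul]

lemma fwdDiff_iter_comp_natCast {R : Type*} [AddCommMonoidWithOne R] (f : R → G) (n m : ℕ) :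
    Δ_[1] ^[n] (f ∘ Nat.cast) m = Δ_[1] ^[n] f (m : R) := by
  simp [fwdDiff_iter_eq_sum_shift]

end

lemma fwdDiff_iter_eval_prod_descPochhammer {R : Type*} [CommRing R] [Nontrivial R]
    [NoZeroDivisors R] {ι : Type*} (s : Finset ι) (q : ι → ℕ) :
    Δ_[1] ^[∑ i ∈ s, q i] (∏ i ∈ s, descPochhammer R (q i)).eval =
      fun _ => ((∑ i ∈ s, q i)! : R) := by
  have hmonic : ∀ i ∈ s, (descPochhammer R (q i)).Monic := fun i _ => monic_descPochhammer R _
  have hdeg := natDegree_prod_of_monic s _ hmonic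
  simp only [descPochhammer_natDegree] at hdeg
  rw [← hdeg, fwdDiff_iter_degree_eq_factorial, (monic_prod_of_monic s _ hmonic).leadingCoeff,
    one_smul]
  rfl

lemma fwdDiff_iter_prod_choose_zero {ι : Type*} (s : Finset ι) (q : ι → ℕ) :
    Δ_[1] ^[∑ i ∈ s, q i] (fun m : ℕ => ∏ i ∈ s, (m.choose (q i) : ℤ)) 0 = Nat.multinomial s q := by
  apply Int.cast_injective (α := ℚ)
  have hchoose : Int.castAddHom ℚ ∘ (fun m : ℕ => ∏ i ∈ s, (m.choose (q i) : ℤ)) =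
      ((∏ i ∈ s, ((q i)! : ℚ))⁻¹ • (∏ i ∈ s, descPochhammer ℚ (q i)).eval) ∘ Nat.cast := by
    ext m
    simp only [Int.coe_castAddHom, Function.comp_apply, Int.cast_prod, Int.cast_natCast,
      Nat.cast_choose_eq_descPochhammer_div, div_eq_mul_inv, prod_mul_distrib, prod_inv_distrib,
      eval_prod, Pi.smul_apply, smul_eq_mul]
    ring
  have hfact : (∏ i ∈ s, ((q i)! : ℚ)) ≠ 0 := prod_ne_zero_iff.mpr fun i _ => by positivity
  change Int.castAddHom ℚ _ = _
  rw [← map_fwdDiff_iter, hchoose, fwdDiff_iter_comp_natCast,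
    fwdDiff_iter_const_smul, fwdDiff_iter_eval_prod_descPochhammer, ← Nat.multinomial_spec s q]
  simp [hfact]

lemma chooseZ_sub_eq_choose {n t a : ℕ} (ht : t ≤ n) (ha : a ≤ n) :
    chooseZ (n - t) ((a : ℤ) - t) = (n - t).choose (n - a) := by
  rcases le_or_gt t a with h | h
  · rw [chooseZ, if_pos (by omega), show ((a : ℤ) - t).toNat = a - t by omega,
      ← Nat.choose_symm (by omega : a - t ≤ n - t)]
    congr 1
    omega
  · rw [chooseZ, if_neg (by omega), Nat.choose_eq_zero_of_lt (by omega)]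

lemma Mcoef_eq_fwdDiff_iter (n : ℕ) {k : ℕ} (p : Fin k → ℕ) (hpn : ∀ i, p i ≤ n) :
    Mcoef n (fun i => (p i : ℤ)) = Δ_[1] ^[n] (fun m : ℕ => ∏ i, (m.choose (n - p i) : ℤ)) 0 := by
  rw [fwdDiff_iter_eq_sum_shift, Mcoef]
  conv_rhs => rw [← sum_range_reflect]
  refine sum_congr rfl fun t ht => ?_
  have htn : t ≤ n := Nat.lt_succ_iff.mp (mem_range.mp ht)
  simp only [add_tsub_cancel_right, Nat.sub_sub_self htn, Nat.choose_symm htn, zero_add,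
    smul_eq_mul, mul_one, chooseZ_sub_eq_choose htn (hpn _)]

/-- In the extremal case `p_1 + ⋯ + p_k = n(k−1)`, the coefficient `M^n_p` is the multinomial
coefficient with parts `n − p_1, …, n − p_k`. -/
theorem Mcoef_extremal (n k : ℕ) (hk : 1 ≤ k) (p : Fin k → ℕ)
    (hpn : ∀ i, p i ≤ n) (hsum : ∑ i, p i = n * (k - 1)) :
    Mcoef n (fun i => (p i : ℤ)) =
      (Nat.multinomial Finset.univ (fun i => n - p i) : ℤ) := by
  have hparts : ∑ i, (n - p i) = n := by
    obtain ⟨k, rfl⟩ := Nat.exists_eq_add_of_le' hk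
    rw [sum_tsub_distrib _ fun i _ => hpn i, hsum, sum_const, card_univ, Fintype.card_fin,
      smul_eq_mul, Nat.add_sub_cancel, add_mul, one_mul, mul_comm, Nat.add_sub_cancel_left]
  have := fwdDiff_iter_prod_choose_zero univ (fun i => n - p i)
  rwa [hparts, ← Mcoef_eq_fwdDiff_iter n p hpn] at this
end

section
/- Let n ≥ 1, k ≥ 1, and let ς be any n-cycle on Fin n. For positive integers r_1,…,r_k let a_{r_1,…,r_k} be the number of k-tuples (π_1,…,π_k) of permutations of Fin n with π_1⋯π_k = ς such that π_i has exactly r_i cycles. Then for all nonnegative integers x_1,…,x_k: Σ_{r_1,…,r_k=1}^{n} a_{r_1,…,r_k} x_1^{r_1}⋯x_k^{r_k} = Σ_{p_1,…,p_k=1}^{n} C^{⟨n⟩}_{p_1,…,p_k} · ∏_{i=1}^{k} C(x_i, p_i), where C(x,p) is the binomial coefficient. -/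
open Finset

/-- The setoid on `Fin n` whose classes are the cycles (orbits) of a permutation. -/
def cycleSetoid {n : ℕ} (π : Equiv.Perm (Fin n)) : Setoid (Fin n) :=
  ⟨π.SameCycle, ⟨fun x => Equiv.Perm.SameCycle.refl π x,
    fun h => Equiv.Perm.SameCycle.symm h, fun h h' => Equiv.Perm.SameCycle.trans h h'⟩⟩

/-- The set of cycles (orbits) of a permutation of `Fin n`; fixed points count as cycles. -/
def PermCycles {n : ℕ} (π : Equiv.Perm (Fin n)) : Type := Quotient (cycleSetoid π)

/-- The number of cycles (orbits) of a permutation of `Fin n`. -/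
noncomputable def cycleCount {n : ℕ} (π : Equiv.Perm (Fin n)) : ℕ := Nat.card (PermCycles π)

/-- The number `C^{⟨n⟩}_{p}` of colored factorizations of `ς`: tuples of `k` permutations with
product `ς`, each equipped with a surjection from its set of cycles onto a set of `p i` colors. -/
noncomputable def Ccount {n k : ℕ} (ς : Equiv.Perm (Fin n)) (p : Fin k → ℕ) : ℕ :=
  Nat.card {t : (i : Fin k) → Σ π : Equiv.Perm (Fin n), (PermCycles π → Fin (p i)) //
    (List.ofFn fun i => (t i).1).prod = ς ∧ ∀ i, Function.Surjective (t i).2}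

-- auxiliary
open scoped Classical

instance permCyclesFinite {n : ℕ} (π : Equiv.Perm (Fin n)) : Finite (PermCycles π) :=
  inferInstanceAs (Finite (Quotient (cycleSetoid π)))

noncomputable instance permCyclesFintype {n : ℕ} (π : Equiv.Perm (Fin n)) :
    Fintype (PermCycles π) := Fintype.ofFinite _

lemma cycleCount_mem {n : ℕ} (hn : 1 ≤ n) (π : Equiv.Perm (Fin n)) :
    cycleCount π ∈ Icc 1 n := by
  have h := Nat.card_eq_fintype_card (α := PermCycles π)
  have hne : Nonempty (PermCycles π) := ⟨Quotient.mk (cycleSetoid π) ⟨0, hn⟩⟩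
  rw [mem_Icc]
  constructor
  · rw [cycleCount, h]; exact Fintype.card_pos
  · have hs : Function.Surjective
        (fun a : Fin n => (Quotient.mk (cycleSetoid π) a : PermCycles π)) :=
      fun q => Quotient.exists_rep q
    have := Nat.card_le_card_of_surjective _ hs
    have h2 : Nat.card (Fin n) = n := by simp [Nat.card_eq_fintype_card]
    rw [cycleCount]
    exact le_trans this (le_of_eq h2)

noncomputable def surjCount (r p : ℕ) : ℕ :=
  Nat.card {f : Fin r → Fin p // Function.Surjective f}

/-- transport surjection-counting along equivs of domain and codomain -/
def surjEquiv {A A' B B' : Type*} (eA : A ≃ A') (eB : B ≃ B') :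
    {f : A → B // Function.Surjective f} ≃ {f : A' → B' // Function.Surjective f} :=
  Equiv.subtypeEquiv (Equiv.arrowCongr eA eB) fun f => by
    show _ ↔ Function.Surjective (⇑eB ∘ f ∘ ⇑eA.symm)
    rw [Equiv.comp_surjective, Equiv.surjective_comp]

lemma card_surj {A : Type*} [Finite A] {r : ℕ} (e : A ≃ Fin r) (p : ℕ) :
    Nat.card {f : A → Fin p // Function.Surjective f} = surjCount r p :=
  Nat.card_congr (surjEquiv e (Equiv.refl _))

lemma surjCount_zero {r : ℕ} (hr : 1 ≤ r) : surjCount r 0 = 0 := by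
  have : IsEmpty {f : Fin r → Fin 0 // Function.Surjective f} :=
    ⟨fun g => (g.1 ⟨0, hr⟩).elim0⟩
  simp [surjCount, Nat.card_of_isEmpty]

lemma surjCount_of_lt {r p : ℕ} (h : r < p) : surjCount r p = 0 := by
  have : IsEmpty {f : Fin r → Fin p // Function.Surjective f} := by
    refine ⟨fun g => absurd (Fintype.card_le_of_surjective g.1 g.2) ?_⟩
    simpa using h.not_ge
  simp [surjCount, Nat.card_of_isEmpty]

/-- functions with prescribed image are equinumerous with surjections -/
def imageEquiv {r x : ℕ} (s : Finset (Fin x)) :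
    {g : Fin r → Fin x // Finset.image g univ = s} ≃
      {h : Fin r → ↥s // Function.Surjective h} where
  toFun g := ⟨fun a => ⟨g.1 a, by
      have h := Finset.mem_image_of_mem g.1 (mem_univ a)
      rwa [g.2] at h⟩, by
    rintro ⟨y, hy⟩
    rw [← g.2] at hy
    obtain ⟨a, -, ha⟩ := Finset.mem_image.1 hy
    exact ⟨a, Subtype.ext ha⟩⟩
  invFun h := ⟨fun a => (h.1 a : Fin x), by
    ext y
    simp only [Finset.mem_image, mem_univ, true_and]
    constructor
    · rintro ⟨a, rfl⟩; exact (h.1 a).2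
    · intro hy
      obtain ⟨a, ha⟩ := h.2 ⟨y, hy⟩
      exact ⟨a, by rw [ha]⟩⟩
  left_inv g := Subtype.ext (funext fun a => rfl)
  right_inv h := Subtype.ext (funext fun a => Subtype.ext rfl)

lemma keyC (n r : ℕ) (h1 : 1 ≤ r) (h2 : r ≤ n) (x : ℕ) :
    x ^ r = ∑ p ∈ Icc 1 n, surjCount r p * x.choose p := by
  have hcard : ∀ s : Finset (Fin x),
      #{g : Fin r → Fin x | Finset.image g univ = s} = surjCount r #s := by
    intro s
    rw [← Fintype.card_subtype, ← Nat.card_eq_fintype_card, Nat.card_congr (imageEquiv s)]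
    exact Nat.card_congr (surjEquiv (Equiv.refl _) (Fintype.equivFinOfCardEq (Fintype.card_coe s)))
  have h0 : x ^ r = ∑ s : Finset (Fin x), surjCount r #s := by
    have hpart := Finset.card_eq_sum_card_fiberwise
      (s := (univ : Finset (Fin r → Fin x))) (t := (univ : Finset (Finset (Fin x))))
      (f := fun g => Finset.image g univ) (fun _ _ => mem_univ _)
    rw [card_univ, Fintype.card_fun, Fintype.card_fin, Fintype.card_fin] at hpart
    rw [hpart]
    exact Finset.sum_congr rfl fun s _ => hcard s
  rw [h0, show (univ : Finset (Finset (Fin x))) = (univ : Finset (Fin x)).powerset from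
    Finset.powerset_univ.symm,
    Finset.sum_powerset_apply_card (f := fun m => surjCount r m)]
  simp only [card_univ, Fintype.card_fin, smul_eq_mul]
  -- now : ∑ m ∈ range (x+1), x.choose m * surjCount r m = ∑ p ∈ Icc 1 n, surjCount r p * x.choose p
  have hF : ∀ m, x.choose m * surjCount r m = surjCount r m * x.choose m := fun m => mul_comm _ _
  simp only [hF]
  set F : ℕ → ℕ := fun m => surjCount r m * x.choose m with hFdef
  have hz1 : ∀ m ∈ range (x + 1), m ∉ range (x + 1) ∩ Icc 1 n → F m = 0 := by
    intro m hm hm'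
    have : m ∉ Icc 1 n := fun h => hm' (Finset.mem_inter.2 ⟨hm, h⟩)
    rw [mem_Icc, not_and_or, not_le, Nat.lt_one_iff, not_le] at this
    rcases this with rfl | hlt
    · simp [F, surjCount_zero h1]
    · have : r < m := lt_of_le_of_lt h2 hlt
      simp [F, surjCount_of_lt this]
  have hz2 : ∀ m ∈ Icc 1 n, m ∉ range (x + 1) ∩ Icc 1 n → F m = 0 := by
    intro m hm hm'
    have : m ∉ range (x + 1) := fun h => hm' (Finset.mem_inter.2 ⟨h, hm⟩)
    rw [mem_range, not_lt] at this
    simp [F, Nat.choose_eq_zero_of_lt (Nat.lt_of_succ_le this)]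
  rw [← Finset.sum_subset Finset.inter_subset_left hz1,
    ← Finset.sum_subset Finset.inter_subset_right hz2]

lemma lemB {n k : ℕ} (ς : Equiv.Perm (Fin n)) (p : Fin k → ℕ) :
    Ccount ς p = ∑ π : {π : Fin k → Equiv.Perm (Fin n) // (List.ofFn π).prod = ς},
      ∏ i, surjCount (cycleCount (π.1 i)) (p i) := by
  rw [Ccount]
  have e : {t : (i : Fin k) → Σ π : Equiv.Perm (Fin n), (PermCycles π → Fin (p i)) //
      (List.ofFn fun i => (t i).1).prod = ς ∧ ∀ i, Function.Surjective (t i).2} ≃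
    Σ π : {π : Fin k → Equiv.Perm (Fin n) // (List.ofFn π).prod = ς},
      (i : Fin k) → {f : PermCycles (π.1 i) → Fin (p i) // Function.Surjective f} :=
  { toFun := fun t => ⟨⟨fun i => (t.1 i).1, t.2.1⟩, fun i => ⟨(t.1 i).2, t.2.2 i⟩⟩
    invFun := fun a => ⟨fun i => ⟨a.1.1 i, (a.2 i).1⟩, a.1.2, fun i => (a.2 i).2⟩
    left_inv := fun t => rfl
    right_inv := fun a => rfl }
  rw [Nat.card_congr e, Nat.card_eq_fintype_card, Fintype.card_sigma]
  refine Finset.sum_congr rfl fun π _ => ?_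
  rw [Fintype.card_pi]
  refine Finset.prod_congr rfl fun i _ => ?_
  rw [← Nat.card_eq_fintype_card]
  exact card_surj (Fintype.equivFinOfCardEq
    (Nat.card_eq_fintype_card (α := PermCycles (π.1 i))).symm) (p i)

lemma lemA {n k : ℕ} (hn : 1 ≤ n) (ς : Equiv.Perm (Fin n)) (x : Fin k → ℕ) :
    ∑ r ∈ Fintype.piFinset (fun _ : Fin k => Finset.Icc 1 n),
        (Nat.card {π : Fin k → Equiv.Perm (Fin n) //
            (List.ofFn π).prod = ς ∧ ∀ i, cycleCount (π i) = r i}) * ∏ i, x i ^ r i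
      = ∑ π : {π : Fin k → Equiv.Perm (Fin n) // (List.ofFn π).prod = ς},
          ∏ i, x i ^ cycleCount (π.1 i) := by
  have hsub : ∀ r : Fin k → ℕ, Nat.card {π : Fin k → Equiv.Perm (Fin n) //
        (List.ofFn π).prod = ς ∧ ∀ i, cycleCount (π i) = r i}
      = #(({π : Fin k → Equiv.Perm (Fin n) | (List.ofFn π).prod = ς} : Finset _).filter
           fun π => (fun i => cycleCount (π i)) = r) := by
    intro r
    rw [Nat.card_eq_fintype_card, Fintype.card_subtype, Finset.filter_filter]
    congr 1
    ext π
    simp [funext_iff]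
  have hsubtype : (∑ π : {π : Fin k → Equiv.Perm (Fin n) // (List.ofFn π).prod = ς},
        ∏ i, x i ^ cycleCount (π.1 i))
      = ∑ π ∈ ({π : Fin k → Equiv.Perm (Fin n) | (List.ofFn π).prod = ς} : Finset _),
          ∏ i, x i ^ cycleCount (π i) :=
    (Finset.sum_subtype
      (s := ({π : Fin k → Equiv.Perm (Fin n) | (List.ofFn π).prod = ς} : Finset _))
      (p := fun π => (List.ofFn π).prod = ς)
      (fun π => by simp only [Finset.mem_filter, Finset.mem_univ, true_and])
      (fun π => ∏ i, x i ^ cycleCount (π i))).symm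
  have hfib := Finset.sum_fiberwise_of_maps_to
      (s := ({π : Fin k → Equiv.Perm (Fin n) | (List.ofFn π).prod = ς} : Finset _))
      (t := Fintype.piFinset fun _ : Fin k => Finset.Icc 1 n)
      (g := fun π (i : Fin k) => cycleCount (π i))
      (fun π _ => by
        rw [Fintype.mem_piFinset]; exact fun i => cycleCount_mem hn (π i))
      (fun π => ∏ i, x i ^ cycleCount (π i))
  rw [hsubtype, ← hfib]
  refine Finset.sum_congr rfl fun r hr => ?_
  rw [hsub r]
  rw [Finset.sum_congr rfl (fun π hπ => ?_), Finset.sum_const, smul_eq_mul]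
  obtain ⟨-, h⟩ := Finset.mem_filter.1 hπ
  rw [funext_iff] at h
  exact Finset.prod_congr rfl fun i _ => by rw [h i]

/-- The change of basis between factorization counts of an `n`-cycle by number of cycles and
counts of colored factorizations. -/
theorem colored_factorization_change_of_basis (n k : ℕ) (hn : 1 ≤ n) (hk : 1 ≤ k)
    (ς : Equiv.Perm (Fin n)) (hς : cycleCount ς = 1) (x : Fin k → ℕ) :
    ∑ r ∈ Fintype.piFinset (fun _ : Fin k => Finset.Icc 1 n),
        (Nat.card {π : Fin k → Equiv.Perm (Fin n) //
            (List.ofFn π).prod = ς ∧ ∀ i, cycleCount (π i) = r i}) *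
          ∏ i, x i ^ r i
      = ∑ p ∈ Fintype.piFinset (fun _ : Fin k => Finset.Icc 1 n),
          Ccount ς p * ∏ i, (x i).choose (p i) := by

  rw [lemA hn ς x]
  simp only [lemB ς, Finset.sum_mul]
  rw [Finset.sum_comm]
  refine Finset.sum_congr rfl fun π _ => ?_
  have : ∀ p ∈ Fintype.piFinset (fun _ : Fin k => Finset.Icc 1 n),
      (∏ i, surjCount (cycleCount (π.1 i)) (p i)) * ∏ i, (x i).choose (p i)
        = ∏ i, surjCount (cycleCount (π.1 i)) (p i) * (x i).choose (p i) :=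
    fun p _ => (Finset.prod_mul_distrib).symm
  rw [Finset.sum_congr rfl this]
  have hprod : (∏ i, x i ^ cycleCount (π.1 i))
      = ∏ i, ∑ q ∈ Finset.Icc 1 n, surjCount (cycleCount (π.1 i)) q * (x i).choose q :=
    Finset.prod_congr rfl fun i _ => by
      have hm := cycleCount_mem hn (π.1 i)
      rw [Finset.mem_Icc] at hm
      exact keyC n _ hm.1 hm.2 (x i)
  rw [hprod, Finset.prod_univ_sum]
end

section
/- Let n ≥ 2, let ς′ be any permutation of Fin n having exactly two cycles, one of length n−1 and one of length 1, and let ς″ be any (n−1)-cycle on Fin (n−1). For all positive integers r and s, the number of pairs (π_1, π_2) of permutations of Fin n with π_1 π_2 = ς′ such that π_1 has exactly r cycles, π_2 has exactly s cycles, and the subgroup generated by π_1 and π_2 acts transitively on Fin n, equals (n−1) times the number of pairs (σ_1, σ_2) of permutations of Fin (n−1) with σ_1 σ_2 = ς″ such that σ_1 has exactly r cycles and σ_2 has exactly s cycles. -/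
open Finset

/-!
Let `ς'` fix `m` and act as a single cycle on the remaining points. If `π₁ * π₂ = ς'`, then
`⟨π₁, π₂⟩` is transitive exactly when `π₂` moves `m`: it already contains `ς'`, which is
transitive off `m`. Put `a = π₂ m`. Multiplying by the transposition `(m a)` splits `m` off the
cycle of `a`, so `(π₁ * (m a), (m a) * π₂)` is a factorization of `ς'` by permutations fixing `m`,
each with one cycle more; restricted to the complement of `m` they factor the `(n - 1)`-cycle
`ς'|`, with the original cycle counts. Conversely `a` and a factorization of `ς'|` determine `π`,
which gives the factor `n - 1`. Finally, all `(n - 1)`-cycles are conjugate, and conjugation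
preserves cycle counts.
-/

open Equiv Function

theorem card_subtype_mul_eq_and {G : Type*} [Group G] (c : G) (P : G → G → Prop) :
    Nat.card {π : G × G // π.1 * π.2 = c ∧ P π.1 π.2} = Nat.card {g : G // P (c * g⁻¹) g} :=
  Nat.card_congr
    { toFun π := ⟨π.1.2, eq_mul_inv_of_mul_eq π.2.1 ▸ π.2.2⟩
      invFun g := ⟨(c * g.1⁻¹, g.1), inv_mul_cancel_right c g.1, g.2⟩
      left_inv π := Subtype.ext (Prod.ext (eq_mul_inv_of_mul_eq π.2.1).symm rfl)
      right_inv _ := rfl }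

theorem Nat.card_subtype_ne {α : Type*} [Finite α] [DecidableEq α] (m : α) :
    Nat.card {x // x ≠ m} = Nat.card α - 1 := by
  rw [← Nat.card_congr (optionSubtypeNe m), Finite.card_option, Nat.add_sub_cancel]

namespace Equiv.Perm

variable {α β : Type*}

noncomputable def numCycles (f : Perm α) : ℕ := Nat.card (Quotient (SameCycle.setoid f))

theorem cycleCount_eq_numCycles {n : ℕ} (π : Perm (Fin n)) : cycleCount π = numCycles π := rfl

theorem sameCycle_permCongr (e : α ≃ β) (f : Perm α) {x y : α} :
    (e.permCongr f).SameCycle (e x) (e y) ↔ f.SameCycle x y :=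
  exists_congr fun k => by
    rw [← permCongrHom_coe, ← map_zpow, permCongrHom_coe, permCongr_apply, symm_apply_apply,
      e.injective.eq_iff]

theorem numCycles_permCongr (e : α ≃ β) (f : Perm α) :
    numCycles (e.permCongr f) = numCycles f :=
  (Nat.card_congr (Quotient.congr e fun _ _ => (sameCycle_permCongr e f).symm)).symm

theorem numCycles_inv (f : Perm α) : numCycles f⁻¹ = numCycles f :=
  Nat.card_congr (Quotient.congr (Equiv.refl α) fun _ _ => sameCycle_inv)

theorem sameCycle_of_numCycles_eq_one {f : Perm α} (hf : numCycles f = 1) (x y : α) :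
    f.SameCycle x y :=
  have := (Nat.card_eq_one_iff_unique.1 hf).1
  Quotient.eq.1 (Subsingleton.elim (Quotient.mk (SameCycle.setoid f) x) (Quotient.mk _ y))

theorem SameCycle.map_of_forall {f : Perm α} {g : Perm β} {φ : α → β}
    (h : ∀ x, g.SameCycle (φ x) (φ (f x))) {x y : α} (hxy : f.SameCycle x y) :
    g.SameCycle (φ x) (φ y) := by
  obtain ⟨k, rfl⟩ := hxy
  induction k using Int.induction_on with
  | zero => exact .rfl
  | succ k ih =>
    rw [add_comm, zpow_add, zpow_one, mul_apply]
    exact ih.trans (h _)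
  | pred k ih =>
    have step := h (f⁻¹ ((f ^ (-(k : ℤ))) x))
    rw [coe_inv, apply_symm_apply] at step
    rw [sub_eq_neg_add, zpow_add, zpow_neg_one, mul_apply]
    exact ih.trans step.symm

theorem isConj_of_numCycles_eq_one [Finite α] {f g : Perm α} (hf : numCycles f = 1)
    (hg : numCycles g = 1) : IsConj f g := by
  cases subsingleton_or_nontrivial α
  · rw [Subsingleton.elim f g]
  have := Fintype.ofFinite α
  classical
  have full_cycle {h : Perm α} (hh : numCycles h = 1) : h.IsCycle ∧ h.support = Finset.univ := by
    have moves (x : α) : h x ≠ x := fun hx =>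
      have ⟨y, hy⟩ := exists_ne x
      hy ((sameCycle_of_numCycles_eq_one hh x y).eq_of_left hx).symm
    obtain ⟨x⟩ := ‹Nontrivial α›.to_nonempty
    exact ⟨⟨x, moves x, fun y _ => sameCycle_of_numCycles_eq_one hh x y⟩,
      Finset.eq_univ_of_forall fun x => mem_support.2 (moves x)⟩
  obtain ⟨hf_cycle, hf_support⟩ := full_cycle hf
  obtain ⟨hg_cycle, hg_support⟩ := full_cycle hg
  exact hf_cycle.isConj hg_cycle (by rw [hf_support, hg_support])

theorem exists_equiv_permCongr_eq_of_numCycles_eq_one [Finite α] [Finite β] {c : Perm α}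
    {d : Perm β} (hc : numCycles c = 1) (hd : numCycles d = 1) (h : Nat.card α = Nat.card β) :
    ∃ e : α ≃ β, e.permCongr c = d := by
  obtain ⟨e⟩ := Finite.card_eq.1 h
  obtain ⟨u, hu⟩ := isConj_iff.1
    (isConj_of_numCycles_eq_one ((numCycles_permCongr e c).trans hc) hd)
  refine ⟨e.trans u, ?_⟩
  rw [← hu]
  ext x
  simp

section Subtype

variable {p : α → Prop} [DecidablePred p]

theorem sameCycle_ofSubtype {σ : Perm (Subtype p)} {x y : Subtype p} :
    (ofSubtype σ).SameCycle x y ↔ σ.SameCycle x y :=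
  sameCycle_extendDomain (f := Equiv.refl _)

theorem numCycles_ofSubtype [Finite α] (σ : Perm (Subtype p)) :
    numCycles (ofSubtype σ) = numCycles σ + Nat.card {x // ¬p x} := by
  have fixed {x : α} (hx : ¬p x) : IsFixedPt (ofSubtype σ) x := ofSubtype_apply_of_not_mem σ hx
  have bij : Bijective (Sum.elim
      (Quotient.map (sa := SameCycle.setoid σ) (sb := SameCycle.setoid (ofSubtype σ))
        Subtype.val fun _ _ => sameCycle_ofSubtype.2)
      fun x : {x // ¬p x} => Quotient.mk (SameCycle.setoid (ofSubtype σ)) x.1) := by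
    refine ⟨Injective.sumElim ?_ ?_ ?_, ?_⟩
    · exact Quotient.ind₂ fun x y h => Quotient.sound (sameCycle_ofSubtype.1 (Quotient.eq.1 h))
    · exact fun x y h => Subtype.ext ((Quotient.eq.1 h).eq_of_left (fixed x.2))
    · exact Quotient.ind fun x y h => y.2 ((Quotient.eq.1 h).eq_of_right (fixed y.2) ▸ x.2)
    · refine Quotient.ind fun z => ?_
      by_cases hz : p z
      · exact ⟨.inl (Quotient.mk _ ⟨z, hz⟩), rfl⟩
      · exact ⟨.inr ⟨z, hz⟩, rfl⟩
  rw [numCycles, ← Nat.card_eq_of_bijective _ bij, Nat.card_sum]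
  rfl

end Subtype

section Ne

variable [DecidableEq α] {m : α}

theorem numCycles_swap_mul_ofSubtype (a : {x // x ≠ m}) (σ : Perm {x // x ≠ m}) :
    numCycles (swap m a * ofSubtype σ) = numCycles σ := by
  set h := swap m a * ofSubtype σ
  have h_self : h m = a := by simp [h, ofSubtype_apply_of_not_mem]
  have h_of_ne (x : {x // x ≠ m}) (hx : σ x ≠ a) : h x = σ x := by
    simpa [h] using swap_apply_of_ne_of_ne (σ x).2 (Subtype.coe_ne_coe.2 hx)
  have h_of_eq (x : {x // x ≠ m}) (hx : σ x = a) : h x = m := by simp [h, hx]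
  -- `h` is `σ` with `m` inserted into the cycle of `a`, just before `a`
  let φ : α → {x // x ≠ m} := fun x => if hx : x = m then a else ⟨x, hx⟩
  have φ_coe (x : {x // x ≠ m}) : φ x = x := dif_neg x.2
  have h_step (x : {x // x ≠ m}) : h.SameCycle x (σ x) := by
    by_cases hx : σ x = a
    · have : h (h x) = σ x := by rw [h_of_eq x hx, h_self, hx]
      exact this ▸ sameCycle_apply_right.2 (sameCycle_apply_right.2 .rfl)
    · exact h_of_ne x hx ▸ sameCycle_apply_right.2 .rfl
  have σ_step (x : α) : σ.SameCycle (φ x) (φ (h x)) := by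
    by_cases hx : x = m
    · simpa [φ, hx, h_self] using SameCycle.refl σ a
    · have : φ (h x) = σ ⟨x, hx⟩ := by
        by_cases hσ : σ ⟨x, hx⟩ = a
        · simp [φ, h_of_eq ⟨x, hx⟩ hσ, hσ]
        · rw [h_of_ne ⟨x, hx⟩ hσ, φ_coe]
      rw [this, show φ x = ⟨x, hx⟩ from dif_neg hx]
      exact sameCycle_apply_right.2 .rfl
  refine Nat.card_congr
    { toFun := Quotient.map φ fun _ _ => SameCycle.map_of_forall σ_step
      invFun := Quotient.map Subtype.val fun _ _ => SameCycle.map_of_forall h_step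
      left_inv := Quotient.ind fun x => Quotient.sound ?_
      right_inv := Quotient.ind fun x => congrArg _ (φ_coe x) }
  by_cases hx : x = m
  · subst hx
    show h.SameCycle (φ x : α) x
    rw [show (φ x : α) = h x by simp [φ, h_self]]
    exact sameCycle_apply_left.2 .rfl
  · simp [φ, hx]

theorem numCycles_ofSubtype_mul_swap (σ : Perm {x // x ≠ m}) (a : {x // x ≠ m}) :
    numCycles (ofSubtype σ * swap m a) = numCycles σ := by
  rw [← numCycles_inv, mul_inv_rev, swap_inv, ← map_inv, numCycles_swap_mul_ofSubtype,
    numCycles_inv]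

/-- The analogue of `Equiv.Perm.decomposeOption` for the permutations moving `m`. -/
def decomposeNe (m : α) : {a // a ≠ m} × Perm {x // x ≠ m} ≃ {τ : Perm α // τ m ≠ m} where
  toFun p := ⟨swap m p.1 * ofSubtype p.2, by
    rw [mul_apply, ofSubtype_apply_of_not_mem (p := (· ≠ m)) _ (not_not.2 rfl), swap_apply_left]
    exact p.1.2⟩
  invFun τ := (⟨τ.1 m, τ.2⟩,
    (swap m (τ.1 m) * τ.1).subtypePerm fun _ => (Equiv.injective _).ne_iff' (by simp))
  left_inv p := by
    ext x
    · simp [ofSubtype_apply_of_not_mem]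
    · simp [ofSubtype_apply_of_not_mem]
  right_inv τ := Subtype.ext <| by
    dsimp only
    rw [ofSubtype_subtypePerm (p := (· ≠ m)) _ fun x hx hxm => hx (by rw [hxm]; simp),
      swap_mul_self_mul]

theorem forall_exists_mem_closure_apply_eq_iff [Nontrivial α] {c : Perm {x // x ≠ m}}
    (hc : numCycles c = 1) {π₁ π₂ : Perm α} (h : π₁ * π₂ = ofSubtype c) :
    (∀ x y : α, ∃ g ∈ Subgroup.closure {π₁, π₂}, g x = y) ↔ π₂ m ≠ m := by
  constructor
  · intro htrans hm₂
    have hm₁ : π₁ m = m := by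
      simpa [hm₂, ofSubtype_apply_of_not_mem] using congrArg (· m) h
    have hstab : Subgroup.closure {π₁, π₂} ≤ MulAction.stabilizer (Perm α) m :=
      (Subgroup.closure_le _).2 (by rintro _ (rfl | rfl) <;> assumption)
    obtain ⟨y, hy⟩ := exists_ne m
    obtain ⟨g, hg, rfl⟩ := htrans m y
    exact hy (hstab hg)
  · intro hm₂
    have hπ₁ : π₁ ∈ Subgroup.closure {π₁, π₂} := Subgroup.subset_closure (by simp)
    have hπ₂ : π₂ ∈ Subgroup.closure {π₁, π₂} := Subgroup.subset_closure (by simp)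
    -- every point other than `m` lies on the cycle of `ofSubtype c` through `π₂ m`
    have reach (z : α) : ∃ g ∈ Subgroup.closure {π₁, π₂}, g m = z := by
      by_cases hz : z = m
      · exact ⟨1, one_mem _, hz.symm⟩
      obtain ⟨k, hk⟩ :=
        sameCycle_ofSubtype.2 (sameCycle_of_numCycles_eq_one hc ⟨π₂ m, hm₂⟩ ⟨z, hz⟩)
      refine ⟨(π₁ * π₂) ^ k * π₂, mul_mem (zpow_mem (mul_mem hπ₁ hπ₂) k) hπ₂, ?_⟩
      rwa [mul_apply, h]
    intro x y
    obtain ⟨g, hg, rfl⟩ := reach x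
    obtain ⟨g', hg', rfl⟩ := reach y
    exact ⟨g' * g⁻¹, mul_mem hg' (inv_mem hg), by simp⟩

end Ne

noncomputable def numFactorizations (c : Perm α) (r s : ℕ) : ℕ :=
  Nat.card {π : Perm α × Perm α // π.1 * π.2 = c ∧ numCycles π.1 = r ∧ numCycles π.2 = s}

theorem numFactorizations_permCongr (e : α ≃ β) (c : Perm α) (r s : ℕ) :
    numFactorizations (e.permCongr c) r s = numFactorizations c r s := by
  refine (Nat.card_congr (subtypeEquiv (e.permCongr.prodCongr e.permCongr) fun π => ?_)).symm
  simp only [prodCongr_apply, Prod.map_fst, Prod.map_snd, numCycles_permCongr]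
  simp only [← permCongrHom_coe, ← map_mul, EmbeddingLike.apply_eq_iff_eq]

theorem card_apply_ne_eq_mul_numFactorizations [Finite α] [DecidableEq α] {m : α}
    (c : Perm {x // x ≠ m}) (r s : ℕ) :
    Nat.card {τ : Perm α // τ m ≠ m ∧ numCycles (ofSubtype c * τ⁻¹) = r ∧ numCycles τ = s}
      = (Nat.card α - 1) * numFactorizations c r s := by
  have numCycles_decomposeNe (p : {a // a ≠ m} × Perm {x // x ≠ m}) :
      numCycles (ofSubtype c * (decomposeNe m p).1⁻¹) = numCycles (c * p.2⁻¹) ∧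
        numCycles (decomposeNe m p).1 = numCycles p.2 := by
    refine ⟨?_, numCycles_swap_mul_ofSubtype _ _⟩
    show numCycles (ofSubtype c * (swap m p.1 * ofSubtype p.2)⁻¹) = _
    rw [mul_inv_rev, swap_inv, ← mul_assoc, ← map_inv, ← map_mul, numCycles_ofSubtype_mul_swap]
  rw [numFactorizations, card_subtype_mul_eq_and c fun σ₁ σ₂ => numCycles σ₁ = r ∧ numCycles σ₂ = s,
    ← Nat.card_subtype_ne m, ← Nat.card_prod]
  calc _ = Nat.card {τ : {τ : Perm α // τ m ≠ m} //
          numCycles (ofSubtype c * τ.1⁻¹) = r ∧ numCycles τ.1 = s} :=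
        Nat.card_congr (subtypeSubtypeEquivSubtypeInter _ _).symm
    _ = Nat.card {p : {a // a ≠ m} × Perm {x // x ≠ m} //
          numCycles (c * p.2⁻¹) = r ∧ numCycles p.2 = s} :=
        Nat.card_congr ((decomposeNe m).subtypeEquiv fun p => by
          rw [(numCycles_decomposeNe p).1, (numCycles_decomposeNe p).2]).symm
    _ = _ := Nat.card_congr
        { toFun p := (p.1.1, ⟨p.1.2, p.2⟩)
          invFun p := ⟨(p.1, p.2.1), p.2.2⟩ }

end Equiv.Perm

open Equiv.Perm

theorem two_factor_transitive_near_cycle_general (n : ℕ) (hn : 2 ≤ n)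
    (ς' : Equiv.Perm (Fin n)) (m : Fin n) (hm : ς' m = m) (h2 : cycleCount ς' = 2)
    (ς'' : Equiv.Perm (Fin (n - 1))) (h1 : cycleCount ς'' = 1)
    (r s : ℕ) :
    Nat.card {π : Equiv.Perm (Fin n) × Equiv.Perm (Fin n) //
        π.1 * π.2 = ς' ∧ cycleCount π.1 = r ∧ cycleCount π.2 = s ∧
          ∀ x y : Fin n, ∃ g ∈ Subgroup.closure {π.1, π.2}, g x = y}
      = (n - 1) * Nat.card {σ : Equiv.Perm (Fin (n - 1)) × Equiv.Perm (Fin (n - 1)) //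
          σ.1 * σ.2 = ς'' ∧ cycleCount σ.1 = r ∧ cycleCount σ.2 = s} := by
  simp only [cycleCount_eq_numCycles] at h1 h2 ⊢
  have : Nontrivial (Fin n) := Fin.nontrivial_iff_two_le.2 hn
  set c := ς'.subtypePerm (p := (· ≠ m)) fun _ => ς'.injective.ne_iff' hm
  have hc_ext : ofSubtype c = ς' := ofSubtype_subtypePerm _ fun x hx hxm => hx (hxm ▸ hm)
  have hc : numCycles c = 1 := by
    have := numCycles_ofSubtype c
    simp only [hc_ext, h2, ne_eq, not_not, Nat.card_unique] at this
    omega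
  obtain ⟨e, he⟩ := exists_equiv_permCongr_eq_of_numCycles_eq_one hc h1 (by simp)
  calc _ = Nat.card {τ : Perm (Fin n) // τ m ≠ m ∧ numCycles (ς' * τ⁻¹) = r ∧ numCycles τ = s} := by
        rw [card_subtype_mul_eq_and ς' fun π₁ π₂ => numCycles π₁ = r ∧ numCycles π₂ = s ∧
          ∀ x y : Fin n, ∃ g ∈ Subgroup.closure {π₁, π₂}, g x = y]
        refine Nat.card_congr (subtypeEquivRight fun τ => ?_)
        rw [forall_exists_mem_closure_apply_eq_iff hc (by rw [hc_ext, inv_mul_cancel_right])]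
        exact and_rotate.symm
    _ = (n - 1) * numFactorizations c r s := by
        rw [← hc_ext, card_apply_ne_eq_mul_numFactorizations, Nat.card_fin]
    _ = _ := by rw [← numFactorizations_permCongr e, he, numFactorizations]

/-- Two-factor transitive factorizations of an `(n−1,1)`-cycle in `S_n` are `(n−1)`-to-one over
two-factor factorizations of an `(n−1)`-cycle in `S_{n−1}`, preserving cycle counts. -/
theorem two_factor_transitive_near_cycle (n : ℕ) (hn : 2 ≤ n)
    (ς' : Equiv.Perm (Fin n)) (m : Fin n) (hm : ς' m = m) (h2 : cycleCount ς' = 2)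
    (ς'' : Equiv.Perm (Fin (n - 1))) (h1 : cycleCount ς'' = 1)
    (r s : ℕ) (hr : 1 ≤ r) (hs : 1 ≤ s) :
    Nat.card {π : Equiv.Perm (Fin n) × Equiv.Perm (Fin n) //
        π.1 * π.2 = ς' ∧ cycleCount π.1 = r ∧ cycleCount π.2 = s ∧
          ∀ x y : Fin n, ∃ g ∈ Subgroup.closure {π.1, π.2}, g x = y}
      = (n - 1) * Nat.card {σ : Equiv.Perm (Fin (n - 1)) × Equiv.Perm (Fin (n - 1)) //
          σ.1 * σ.2 = ς'' ∧ cycleCount σ.1 = r ∧ cycleCount σ.2 = s} :=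
  two_factor_transitive_near_cycle_general n hn ς' m hm h2 ς'' h1 r s
end
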